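/- Let 𝒯 = {(T_1,φ_1),…,(T_k,φ_k)} be a collection of k unrooted phylogenetic trees, not necessarily on the same label set. If 𝒯 admits a strictly compatible supertree, then the display graph D_𝒯 of 𝒯 has treewidth at most k. -/

import Mathlib

open SimpleGraph

/-- The degree of a vertex `v` in a simple graph `G`. -/
noncomputable def gdeg {V : Type} (G : SimpleGraph V) (v : V) : ℕ :=
  (G.neighborSet v).ncard

/-- An unrooted phylogenetic tree on vertex type `V` with labels in `X`:
a tree with no degree-2 vertex, whose degree-1 vertices (leaves) are bijectively
labeled (here via a partial, injective labeling defined exactly on the leaves). -/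
structure UPT (V X : Type) where
  graph : SimpleGraph V
  isTree : graph.IsTree
  noDeg2 : ∀ v, gdeg graph v ≠ 2
  lab : V → Option X
  lab_leaf : ∀ v, (lab v).isSome ↔ gdeg graph v = 1
  lab_inj : ∀ v w x, lab v = some x → lab w = some x → v = w

/-- The label set of an unrooted phylogenetic tree. -/
def UPT.labels {V X : Type} (T : UPT V X) : Set X := {x | ∃ v, T.lab v = some x}

/-- A graph whose vertices are partially labeled by elements of `X`. -/
structure LGraph (V X : Type) where
  graph : SimpleGraph V
  lab : V → Option X

/-- The underlying labeled graph of an unrooted phylogenetic tree. -/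
def UPT.toLG {V X : Type} (T : UPT V X) : LGraph V X := ⟨T.graph, T.lab⟩

/-- The vertex set of the minimal subtree of `T` containing all leaves with labels
in `Y`: all vertices lying on a path between two leaves labeled in `Y`. -/
def UPT.steiner {V X : Type} (T : UPT V X) (Y : Set X) : Set V :=
  {v | ∃ a b, (∃ y ∈ Y, T.lab a = some y) ∧ (∃ y ∈ Y, T.lab b = some y) ∧
    ∃ p : T.graph.Walk a b, p.IsPath ∧ v ∈ p.support}

/-- The vertices of the minimal subtree spanning the `Y`-labeled leaves that are kept
after suppressing degree-2 vertices: those of degree `≠ 2` in that subtree. -/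
def UPT.kept {V X : Type} (T : UPT V X) (Y : Set X) : Set (T.steiner Y) :=
  {v | gdeg (T.graph.induce (T.steiner Y)) v ≠ 2}

/-- The restriction `T|_Y` of an unrooted phylogenetic tree `T` to the label set `Y`:
take the minimal subtree containing the leaves labeled in `Y` and suppress all
degree-2 vertices.  Two kept vertices are adjacent iff some path of the minimal
subtree joins them through suppressed (degree-2) vertices only.  Leaves keep their labels. -/
def UPT.restrict {V X : Type} (T : UPT V X) (Y : Set X) : LGraph (T.kept Y) X where
  graph := SimpleGraph.fromRel (fun u v =>
    ∃ p : (T.graph.induce (T.steiner Y)).Walk u.1 v.1, p.IsPath ∧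
      ∀ w ∈ p.support, w ≠ u.1 → w ≠ v.1 → w ∉ T.kept Y)
  lab := fun v => T.lab v.1.1

/-- `A.ContractsTo B`: the labeled graph `B` can be obtained from the labeled graph `A`
by contracting edges both of whose endpoints are unlabeled (upt-contractions):
there is a surjection of vertices whose fibers are connected, classes containing a
labeled vertex are singletons, adjacency is inherited, and labels are preserved. -/
def LGraph.ContractsTo {V W X : Type} (A : LGraph V X) (B : LGraph W X) : Prop :=
  ∃ f : V → W, Function.Surjective f ∧
    (∀ w : W, (A.graph.induce {v | f v = w}).Connected) ∧
    (∀ x y : W, B.graph.Adj x y ↔ x ≠ y ∧ ∃ u v, f u = x ∧ f v = y ∧ A.graph.Adj u v) ∧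
    (∀ v : V, B.lab (f v) = A.lab v) ∧
    (∀ u v : V, A.lab u ≠ none → f u = f v → u = v)

/-- A label-preserving isomorphism between two labeled graphs. -/
def LGraph.Iso {V W X : Type} (A : LGraph V X) (B : LGraph W X) : Prop :=
  ∃ e : A.graph ≃g B.graph, ∀ v, B.lab (e v) = A.lab v

/-- `S` is a compatible supertree of the collection `trees`: its label set is the union
of the label sets of the trees, and each tree `T_i` can be obtained from the
restriction `S|_{L(T_i)}` by upt-contractions. -/
def IsCompatSupertree {k : ℕ} {X : Type} {V : Fin k → Type} {W : Type}
    (trees : ∀ i, UPT (V i) X) (S : UPT W X) : Prop :=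
  S.labels = ⋃ i, (trees i).labels ∧
  ∀ i, LGraph.ContractsTo (S.restrict (trees i).labels) (trees i).toLG

/-- `S` is a strictly compatible supertree of the collection `trees`: its label set is
the union of the label sets of the trees, and each tree `T_i` is isomorphic to the
restriction `S|_{L(T_i)}` via a label-preserving isomorphism. -/
def IsStrictSupertree {k : ℕ} {X : Type} {V : Fin k → Type} {W : Type}
    (trees : ∀ i, UPT (V i) X) (S : UPT W X) : Prop :=
  S.labels = ⋃ i, (trees i).labels ∧
  ∀ i, LGraph.Iso (S.restrict (trees i).labels) (trees i).toLG

/-- The setoid on the disjoint union of the vertex sets of the trees identifying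
labeled vertices carrying the same label. -/
def dispSetoid {k : ℕ} {X : Type} {V : Fin k → Type} (trees : ∀ i, UPT (V i) X) :
    Setoid ((i : Fin k) × V i) where
  r a b := a = b ∨ ∃ x, (trees a.1).lab a.2 = some x ∧ (trees b.1).lab b.2 = some x
  iseqv := by
    constructor
    · intro a; exact Or.inl rfl
    · intro a b h
      rcases h with rfl | ⟨x, h1, h2⟩
      · exact Or.inl rfl
      · exact Or.inr ⟨x, h2, h1⟩
    · intro a b c hab hbc
      rcases hab with rfl | ⟨x, h1, h2⟩
      · exact hbc
      · rcases hbc with rfl | ⟨y, h3, h4⟩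
        · exact Or.inr ⟨x, h1, h2⟩
        · rw [h2] at h3
          injection h3 with hxy
          subst hxy
          exact Or.inr ⟨x, h1, h4⟩

/-- The display graph of a collection of unrooted phylogenetic trees: the disjoint
union of the trees with leaves carrying the same label identified. -/
def displayGraph {k : ℕ} {X : Type} {V : Fin k → Type} (trees : ∀ i, UPT (V i) X) :
    SimpleGraph (Quotient (dispSetoid trees)) :=
  SimpleGraph.fromRel (fun q1 q2 => ∃ (i : Fin k) (u v : V i),
    (trees i).graph.Adj u v ∧ q1 = Quotient.mk (dispSetoid trees) ⟨i, u⟩ ∧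
      q2 = Quotient.mk (dispSetoid trees) ⟨i, v⟩)

/-- A tree-decomposition of a graph `G` with nodes indexed by `N`. -/
structure TreeDecomp {V : Type} (G : SimpleGraph V) (N : Type) where
  tree : SimpleGraph N
  isTree : tree.IsTree
  bag : N → Set V
  covers_vertex : ∀ v, ∃ t, v ∈ bag t
  covers_edge : ∀ ⦃u v⦄, G.Adj u v → ∃ t, u ∈ bag t ∧ v ∈ bag t
  coherent : ∀ v, (tree.induce {t | v ∈ bag t}).Connected

/-- `G` has treewidth at most `k`: it has a tree-decomposition all of whose bags
have at most `k + 1` vertices. -/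
def TreewidthAtMost {V : Type} (G : SimpleGraph V) (k : ℕ) : Prop :=
  ∃ (N : Type) (d : TreeDecomp G N), ∀ t, (d.bag t).ncard ≤ k + 1

namespace BL

open SimpleGraph Walk



variable {α : Type}

/-- Any walk from a vertex not satisfying `c` to a vertex satisfying `c`
contains a crossing dart. -/
lemma exists_crossing_dart {G : SimpleGraph α} (c : α → Prop) :
    ∀ {v w : α} (p : G.Walk v w), ¬ c v → c w →
      ∃ d ∈ p.darts, ¬ c d.fst ∧ c d.snd := by
  intro v w p
  induction p with
  | nil => intro h h'; exact absurd h' h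
  | @cons u m w h q ih =>
    intro hv hw
    by_cases hm : c m
    · exact ⟨⟨(u, m), h⟩, by simp [darts_cons], hv, hm⟩
    · obtain ⟨d, hd, h1, h2⟩ := ih hm hw
      exact ⟨d, by simp [darts_cons, hd], h1, h2⟩

lemma exists_dart_into {G : SimpleGraph α} :
    ∀ {u v : α} (p : G.Walk u v) {z : α}, z ∈ p.support → z ≠ u →
      ∃ d ∈ p.darts, d.snd = z := by
  intro u v p
  induction p with
  | nil => intro z hz hzu; simp at hz; exact absurd hz hzu
  | @cons u m w h q ih =>
    intro z hz hzu
    rw [support_cons, List.mem_cons] at hz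
    rcases hz with rfl | hz
    · exact absurd rfl hzu
    by_cases hzm : z = m
    · exact ⟨⟨(u, m), h⟩, by simp [darts_cons], hzm.symm⟩
    · obtain ⟨d, hd, hds⟩ := ih hz hzm
      exact ⟨d, by simp [darts_cons, hd], hds⟩

lemma exists_dart_out {G : SimpleGraph α} {u v : α} (p : G.Walk u v) {z : α}
    (hz : z ∈ p.support) (hzv : z ≠ v) : ∃ d ∈ p.darts, d.fst = z := by
  have hz' : z ∈ p.reverse.support := by rwa [support_reverse, List.mem_reverse]
  obtain ⟨d, hd, hds⟩ := exists_dart_into p.reverse hz' hzv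
  rw [mem_darts_reverse] at hd
  exact ⟨d.symm, hd, hds⟩

/-- In a path, every neighbor of an interior vertex of degree 2 lies on the path. -/
lemma interior_neighbors_mem_support {G : SimpleGraph α} [Finite α] {u v : α}
    {p : G.Walk u v} (hp : p.IsPath) {z : α} (hz : z ∈ p.support) (hzu : z ≠ u)
    (hzv : z ≠ v) (hdeg : (G.neighborSet z).ncard = 2) :
    ∀ y, G.Adj z y → y ∈ p.support := by
  obtain ⟨d1, hd1, hd1z⟩ := exists_dart_into p hz hzu
  obtain ⟨d2, hd2, hd2z⟩ := exists_dart_out p hz hzv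
  have hne : d1.fst ≠ d2.snd := by
    intro he
    have hedge : d1.edge = d2.edge := by
      show s(d1.fst, d1.snd) = s(d2.fst, d2.snd)
      rw [hd1z, hd2z, he, Sym2.eq_swap]
    have h12 : d1 = d2 :=
      List.inj_on_of_nodup_map hp.isTrail.edges_nodup hd1 hd2 hedge
    have : G.Adj z z := by
      have := d1.adj
      rwa [hd1z, h12, hd2z] at this
    exact G.irrefl this
  have hsub : ({d1.fst, d2.snd} : Set α) ⊆ G.neighborSet z := by
    rintro y (rfl | rfl)
    · exact (hd1z ▸ d1.adj).symm
    · exact hd2z ▸ d2.adj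
  have hcard : (G.neighborSet z).ncard ≤ ({d1.fst, d2.snd} : Set α).ncard := by
    rw [hdeg, Set.ncard_pair hne]
  have heq : ({d1.fst, d2.snd} : Set α) = G.neighborSet z :=
    Set.eq_of_subset_of_ncard_le hsub hcard (Set.toFinite _)
  intro y hy
  have : y ∈ ({d1.fst, d2.snd} : Set α) := by rw [heq]; exact hy
  rcases this with rfl | rfl
  · exact dart_fst_mem_support_of_mem_darts p hd1
  · exact dart_snd_mem_support_of_mem_darts p hd2

/-- From a walk starting at a non-`P` vertex and ending at a `P` vertex, extract
an all-non-`P` prefix together with a final step into a `P` vertex. -/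
lemma exists_escape {G : SimpleGraph α} (P : α → Prop) :
    ∀ {s t : α} (q : G.Walk s t), P t → ¬ P s →
      ∃ (y u : α) (q0 : G.Walk s y), G.Adj y u ∧ P u ∧ ∀ z ∈ q0.support, ¬ P z := by
  intro s t q
  induction q with
  | nil => intro ht hs; exact absurd ht hs
  | @cons s m t h q ih =>
    intro ht hs
    by_cases hm : P m
    · exact ⟨s, m, Walk.nil, h, hm, by simp [hs]⟩
    · obtain ⟨y, u, q0, hadj, hu, hall⟩ := ih ht hm
      exact ⟨y, u, Walk.cons h q0, hadj, hu, by
        intro z hzs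
        rw [support_cons, List.mem_cons] at hzs
        rcases hzs with rfl | hzs
        · exact hs
        · exact hall z hzs⟩

/-- A walk whose support lies in `A` gives a walk in the induced graph. -/
lemma walk_toInduce {G : SimpleGraph α} {A : Set α} :
    ∀ {x y : α} (q : G.Walk x y), (∀ z ∈ q.support, z ∈ A) →
      ∀ (hx : x ∈ A) (hy : y ∈ A), ∃ q' : (G.induce A).Walk ⟨x, hx⟩ ⟨y, hy⟩,
        ∀ z ∈ q'.support, z.1 ∈ q.support := by
  intro x y q
  induction q with
  | nil =>
    intro _ hx hy
    exact ⟨Walk.nil.copy rfl (by simp), by simp⟩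
  | @cons x m y h q ih =>
    intro hA hx hy
    have hm : m ∈ A := hA m (by simp [support_cons])
    obtain ⟨q', hq'⟩ := ih (fun z hz => hA z (by simp [support_cons, hz])) hm hy
    have hadj : (G.induce A).Adj ⟨x, hx⟩ ⟨m, hm⟩ := h
    refine ⟨Walk.cons hadj q', ?_⟩
    intro z hzs
    rw [support_cons, List.mem_cons] at hzs
    rcases hzs with rfl | hzs
    · simp [support_cons]
    · simp [support_cons, hq' z hzs]

/-- A walk in an induced subgraph maps to a walk in the ambient graph. -/
lemma walk_ofInduce {G : SimpleGraph α} {A : Set α} {x y : ↥A}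
    (q : (G.induce A).Walk x y) :
    ∃ q' : G.Walk x.1 y.1, ∀ z ∈ q'.support, ∃ z' ∈ q.support, z = z'.1 := by
  refine ⟨q.map (Embedding.induce A).toHom, ?_⟩
  intro z hz
  replace hz : z ∈ List.map (Embedding.induce (G := G) A).toHom q.support := by
    rw [← Walk.support_map]; exact hz
  rw [List.mem_map] at hz
  obtain ⟨z', hz', rfl⟩ := hz
  exact ⟨z', hz', rfl⟩

lemma gdeg_induce_le {G : SimpleGraph α} [Finite α] (A : Set α) (x : ↥A) :
    gdeg (G.induce A) x ≤ gdeg G x.1 := by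
  unfold gdeg
  have h1 : ((G.induce A).neighborSet x).ncard
      = (Subtype.val '' ((G.induce A).neighborSet x)).ncard :=
    (Set.ncard_image_of_injective _ Subtype.val_injective).symm
  rw [h1]
  refine Set.ncard_le_ncard ?_ (Set.toFinite _)
  rintro z ⟨z', hz', rfl⟩
  exact hz'




section Supp
variable {α : Type} (G : SimpleGraph α) (K : α → Prop)

/-- Connected through non-`K` vertices. -/
def SConn (x y : α) : Prop := ∃ q : G.Walk x y, ∀ z ∈ q.support, ¬ K z

variable {G K}

lemma SConn.refl' {x : α} (hx : ¬ K x) : SConn G K x x :=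
  ⟨Walk.nil, by simpa using hx⟩

lemma SConn.symm' {x y : α} (h : SConn G K x y) : SConn G K y x := by
  obtain ⟨q, hq⟩ := h
  exact ⟨q.reverse, by
    intro z hz; rw [support_reverse, List.mem_reverse] at hz; exact hq z hz⟩

lemma SConn.trans' {x y z : α} (h1 : SConn G K x y) (h2 : SConn G K y z) :
    SConn G K x z := by
  obtain ⟨q1, hq1⟩ := h1
  obtain ⟨q2, hq2⟩ := h2
  refine ⟨q1.append q2, ?_⟩
  intro m hm
  rw [mem_support_append_iff] at hm
  rcases hm with hm | hm
  · exact hq1 m hm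
  · exact hq2 m hm

lemma sconn_of_mem_support {x y z : α} (q : G.Walk x y)
    (hall : ∀ m ∈ q.support, ¬ K m) (hz : z ∈ q.support) : SConn G K x z := by
  letI := Classical.decEq α
  exact ⟨q.takeUntil z hz, fun m hm => hall m (q.support_takeUntil_subset hz hm)⟩

variable (G K) in
/-- Setoid of suppressed components. -/
def suppSetoid : Setoid {x : α // ¬ K x} where
  r a b := SConn G K a.1 b.1
  iseqv := ⟨fun a => SConn.refl' a.2, SConn.symm', SConn.trans'⟩

variable (G K) in
noncomputable def srep (x : {x : α // ¬ K x}) : {x : α // ¬ K x} :=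
  (Quotient.mk (suppSetoid G K) x).out

lemma srep_sconn (x : {x : α // ¬ K x}) : SConn G K (srep G K x).1 x.1 :=
  Quotient.mk_out (s := suppSetoid G K) x

lemma srep_eq {x y : {x : α // ¬ K x}} (h : SConn G K x.1 y.1) :
    srep G K x = srep G K y := by
  unfold srep
  rw [Quotient.sound (a := x) (b := y) h]

variable (hesc : ∀ x : {x : α // ¬ K x}, ∃ u, K u ∧
    ∃ (y : α) (q0 : G.Walk x.1 y), G.Adj y u ∧ ∀ z ∈ q0.support, ¬ K z)

variable (G K) in
noncomputable def assign (x : {x : α // ¬ K x}) : α := (hesc (srep G K x)).choose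

lemma assign_kept (x : {x : α // ¬ K x}) : K (assign G K hesc x) :=
  (hesc _).choose_spec.1

lemma assign_spec (x : {x : α // ¬ K x}) :
    ∃ (y : α) (q0 : G.Walk x.1 y), G.Adj y (assign G K hesc x) ∧
      ∀ z ∈ q0.support, ¬ K z := by
  obtain ⟨y, q0, hadj, hall⟩ := (hesc (srep G K x)).choose_spec.2
  obtain ⟨q1, hq1⟩ := SConn.symm' (srep_sconn (G := G) (K := K) x)
  refine ⟨y, q1.append q0, hadj, ?_⟩
  intro z hz
  rw [mem_support_append_iff] at hz
  rcases hz with hz | hz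
  · exact hq1 z hz
  · exact hall z hz

lemma assign_eq_of_sconn {x y : {x : α // ¬ K x}} (h : SConn G K x.1 y.1) :
    assign G K hesc x = assign G K hesc y :=
  congrArg (fun z => (hesc z).choose) (srep_eq h)

end Supp


section PerTree
variable {X W : Type} [Fintype W] (S : UPT W X) (Y : Set X)

lemma kept_of_isSome {w : W} (hw : (S.lab w).isSome) (h : w ∈ S.steiner Y) :
    (⟨w, h⟩ : ↥(S.steiner Y)) ∈ S.kept Y := by
  have hdeg : gdeg S.graph w = 1 := (S.lab_leaf w).1 hw
  have hle : gdeg (S.graph.induce (S.steiner Y)) ⟨w, h⟩ ≤ gdeg S.graph w :=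
    gdeg_induce_le (G := S.graph) (S.steiner Y) ⟨w, h⟩
  show gdeg (S.graph.induce (S.steiner Y)) ⟨w, h⟩ ≠ 2
  omega

lemma esc_exists : ∀ x : {x : ↥(S.steiner Y) // ¬ x ∈ S.kept Y},
    ∃ u, u ∈ S.kept Y ∧ ∃ (y : ↥(S.steiner Y))
      (q0 : (S.graph.induce (S.steiner Y)).Walk x.1 y),
      (S.graph.induce (S.steiner Y)).Adj y u ∧ ∀ z ∈ q0.support, ¬ z ∈ S.kept Y := by
  classical
  rintro ⟨x, hxK⟩
  obtain ⟨a, b, ha, hb, p, hp, hxp⟩ := x.2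
  have hsupp : ∀ z ∈ p.support, z ∈ S.steiner Y :=
    fun z hz => ⟨a, b, ha, hb, p, hp, hz⟩
  have haS : a ∈ S.steiner Y := hsupp a p.start_mem_support
  have hq : ∀ z ∈ (p.takeUntil x.1 hxp).reverse.support, z ∈ S.steiner Y := by
    intro z hz
    rw [support_reverse, List.mem_reverse] at hz
    exact hsupp z (p.support_takeUntil_subset hxp hz)
  obtain ⟨q', hq'⟩ := walk_toInduce (p.takeUntil x.1 hxp).reverse hq x.2 haS
  have hKa : (⟨a, haS⟩ : ↥(S.steiner Y)) ∈ S.kept Y := by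
    obtain ⟨ya, _, hya⟩ := ha
    exact kept_of_isSome S Y (by rw [hya]; rfl) haS
  obtain ⟨y, u, q0, hadj, hu, hall⟩ :=
    exists_escape (· ∈ S.kept Y) q' hKa hxK
  exact ⟨u, hu, y, q0, hadj, hall⟩

variable {V' : Type} {G' : SimpleGraph V'} (e : (S.restrict Y).graph ≃g G')

noncomputable def fK (x : ↥(S.steiner Y)) : V' :=
  letI := Classical.dec (x ∈ S.kept Y)
  if hK : x ∈ S.kept Y then e ⟨x, hK⟩
  else e ⟨assign _ _ (esc_exists S Y) ⟨x, hK⟩,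
    assign_kept (esc_exists S Y) ⟨x, hK⟩⟩

noncomputable def fW : W → Option V' := fun w =>
  letI := Classical.dec (w ∈ S.steiner Y)
  if h : w ∈ S.steiner Y then some (fK S Y e ⟨w, h⟩) else none

noncomputable def iW (a : V') : W := ((e.symm a).1 : ↥(S.steiner Y)).1

lemma fW_val (x : ↥(S.steiner Y)) : fW S Y e x.1 = some (fK S Y e x) := by
  unfold fW
  rw [dif_pos x.2]

lemma fW_kept (x : ↥(S.steiner Y)) (hK : x ∈ S.kept Y) :
    fW S Y e x.1 = some (e ⟨x, hK⟩) := by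
  rw [fW_val]
  unfold fK
  rw [dif_pos hK]

lemma fW_supp (x : ↥(S.steiner Y)) (hK : ¬ x ∈ S.kept Y) :
    fW S Y e x.1 = some (e ⟨assign _ _ (esc_exists S Y) ⟨x, hK⟩,
      assign_kept (esc_exists S Y) ⟨x, hK⟩⟩) := by
  rw [fW_val]
  unfold fK
  rw [dif_neg hK]

lemma fW_none {w : W} (h : ¬ w ∈ S.steiner Y) : fW S Y e w = none := by
  unfold fW
  rw [dif_neg h]

lemma fW_iW (a : V') : fW S Y e (iW S Y e a) = some a := by
  have h1 := fW_kept S Y e (e.symm a).1 (e.symm a).2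
  have h2 : (⟨(e.symm a).1, (e.symm a).2⟩ : ↥(S.kept Y)) = e.symm a := rfl
  rw [h2] at h1
  rw [show iW S Y e a = ((e.symm a).1 : ↥(S.steiner Y)).1 from rfl, h1,
    RelIso.apply_symm_apply]

lemma fiber_walk {w : W} {a : V'} (h : fW S Y e w = some a) :
    ∃ q : S.graph.Walk w (iW S Y e a), ∀ z ∈ q.support, fW S Y e z = some a := by
  by_cases hS : w ∈ S.steiner Y
  swap
  · rw [fW_none S Y e hS] at h; exact absurd h (by simp)
  by_cases hK : (⟨w, hS⟩ : ↥(S.steiner Y)) ∈ S.kept Y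
  · have ha : some (e ⟨⟨w, hS⟩, hK⟩) = some a := (fW_kept S Y e ⟨w, hS⟩ hK).symm.trans h
    have hiw : iW S Y e a = w := by
      rw [iW, ← Option.some_inj.mp ha, RelIso.symm_apply_apply]
    rw [hiw]
    exact ⟨Walk.nil, by simpa using h⟩
  · have ha : some (e ⟨assign _ _ (esc_exists S Y) ⟨⟨w, hS⟩, hK⟩,
        assign_kept (esc_exists S Y) ⟨⟨w, hS⟩, hK⟩⟩) = some a :=
      (fW_supp S Y e ⟨w, hS⟩ hK).symm.trans h
    have hiw : iW S Y e a = (assign _ _ (esc_exists S Y) ⟨⟨w, hS⟩, hK⟩).1 := by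
      rw [iW, ← Option.some_inj.mp ha, RelIso.symm_apply_apply]
    obtain ⟨y, q0, hadj, hall⟩ := assign_spec (esc_exists S Y) ⟨⟨w, hS⟩, hK⟩
    obtain ⟨qS, hqS⟩ := walk_ofInduce (q0.concat hadj)
    refine ⟨qS.copy rfl hiw.symm, ?_⟩
    intro z hz
    rw [support_copy] at hz
    obtain ⟨z', hz', rfl⟩ := hqS z hz
    rw [support_concat, List.mem_append] at hz'
    rcases hz' with hz' | hz'
    · have hz'K : ¬ z' ∈ S.kept Y := hall z' hz'
      have hsc := sconn_of_mem_support q0 hall hz'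
      have heqa : assign _ _ (esc_exists S Y) ⟨z', hz'K⟩
          = assign _ _ (esc_exists S Y) ⟨⟨w, hS⟩, hK⟩ :=
        (assign_eq_of_sconn (esc_exists S Y) hsc).symm
      rw [fW_supp S Y e z' hz'K, ← ha]
      exact congrArg (fun t => some (e t)) (Subtype.ext heqa)
    · simp only [List.mem_singleton] at hz'
      subst hz'
      rw [fW_kept S Y e _ (assign_kept (esc_exists S Y) ⟨⟨w, hS⟩, hK⟩), ← ha]

lemma cross_of_rel (u₀ v₀ : ↥(S.kept Y)) (hne : u₀ ≠ v₀)
    (p : (S.graph.induce (S.steiner Y)).Walk u₀.1 v₀.1) (hp : p.IsPath)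
    (hint : ∀ z ∈ p.support, z ≠ u₀.1 → z ≠ v₀.1 → z ∉ S.kept Y) :
    ∃ w w', S.graph.Adj w w' ∧ fW S Y e w = some (e u₀) ∧
      fW S Y e w' = some (e v₀) := by
  classical
  have hne1 : u₀.1 ≠ v₀.1 := fun hh => hne (Subtype.ext hh)
  have hfKu : fW S Y e u₀.1.1 = some (e u₀) := fW_kept S Y e u₀.1 u₀.2
  have hfKv : fW S Y e v₀.1.1 = some (e v₀) := fW_kept S Y e v₀.1 v₀.2
  obtain ⟨x₁, h01, q, rfl⟩ := Walk.exists_eq_cons_of_ne hne1 p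
  by_cases hx1 : x₁ = v₀.1
  · refine ⟨u₀.1.1, v₀.1.1, ?_, hfKu, hfKv⟩
    have := h01
    rw [hx1] at this
    exact this
  -- x₁ is an interior vertex
  have hq_path : q.IsPath := hp.of_cons
  have hu_not_q : u₀.1 ∉ q.support := ((Walk.cons_isPath_iff _ _).1 hp).2
  have hInotK : ∀ z : ↥(S.steiner Y),
      (z ∈ (Walk.cons h01 q).support ∧ z ≠ u₀.1 ∧ z ≠ v₀.1) → ¬ z ∈ S.kept Y :=
    fun z hz => hint z hz.1 hz.2.1 hz.2.2
  have hIdeg : ∀ z : ↥(S.steiner Y),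
      (z ∈ (Walk.cons h01 q).support ∧ z ≠ u₀.1 ∧ z ≠ v₀.1) →
      ((S.graph.induce (S.steiner Y)).neighborSet z).ncard = 2 := by
    intro z hz
    have h1 := hInotK z hz
    by_contra hcon
    exact h1 hcon
  have hx1I : x₁ ∈ (Walk.cons h01 q).support ∧ x₁ ≠ u₀.1 ∧ x₁ ≠ v₀.1 :=
    ⟨by simp [support_cons], Ne.symm h01.ne, hx1⟩
  have claimB : ∀ (z y' : ↥(S.steiner Y)) (q0 : (S.graph.induce (S.steiner Y)).Walk z y'),
      (z ∈ (Walk.cons h01 q).support ∧ z ≠ u₀.1 ∧ z ≠ v₀.1) →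
      (∀ m ∈ q0.support, ¬ m ∈ S.kept Y) → ∀ m ∈ q0.support,
      m ∈ (Walk.cons h01 q).support ∧ m ≠ u₀.1 ∧ m ≠ v₀.1 := by
    intro z y' q0
    induction q0 with
    | nil =>
      intro hz _ m hm
      simp only [support_nil, List.mem_singleton] at hm
      subst hm; exact hz
    | @cons z m y' hzm rest ih =>
      intro hz hall m' hm'
      have hmP : m ∈ (Walk.cons h01 q).support :=
        interior_neighbors_mem_support hp hz.1 hz.2.1 hz.2.2 (hIdeg z hz) m hzm
      have hmK : ¬ m ∈ S.kept Y := hall m (by simp [support_cons])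
      have hmI : m ∈ (Walk.cons h01 q).support ∧ m ≠ u₀.1 ∧ m ≠ v₀.1 := ⟨hmP,
        fun hh => hmK (hh ▸ u₀.2), fun hh => hmK (hh ▸ v₀.2)⟩
      rw [support_cons, List.mem_cons] at hm'
      rcases hm' with rfl | hm'
      · exact hz
      · exact ih hmI (fun m'' hm'' => hall m'' (by simp [support_cons, hm''])) m' hm'
  have claimD : ∀ (z : ↥(S.steiner Y))
      (hzI : z ∈ (Walk.cons h01 q).support ∧ z ≠ u₀.1 ∧ z ≠ v₀.1)
      (hzK : ¬ z ∈ S.kept Y),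
      assign _ _ (esc_exists S Y) ⟨z, hzK⟩ = u₀.1 ∨
      assign _ _ (esc_exists S Y) ⟨z, hzK⟩ = v₀.1 := by
    intro z hzI hzK
    obtain ⟨y, q0, hadj, hall⟩ := assign_spec (esc_exists S Y) ⟨z, hzK⟩
    have hyI := claimB z y q0 hzI hall y q0.end_mem_support
    have hasgP : assign _ _ (esc_exists S Y) ⟨z, hzK⟩ ∈ (Walk.cons h01 q).support :=
      interior_neighbors_mem_support hp hyI.1 hyI.2.1 hyI.2.2 (hIdeg y hyI) _ hadj
    have hasgK := assign_kept (esc_exists S Y) ⟨z, hzK⟩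
    by_contra hcon
    push_neg at hcon
    exact hint _ hasgP hcon.1 hcon.2 hasgK
  have claimE : ∀ z : ↥(S.steiner Y),
      (z ∈ (Walk.cons h01 q).support ∧ z ≠ u₀.1 ∧ z ≠ v₀.1) →
      SConn (S.graph.induce (S.steiner Y)) (· ∈ S.kept Y) x₁ z := by
    intro z hzI
    have hzq : z ∈ q.support := by
      have h1 := hzI.1
      rw [support_cons, List.mem_cons] at h1
      rcases h1 with h1 | h1
      · exact absurd h1 hzI.2.1
      · exact h1
    refine ⟨q.takeUntil z hzq, ?_⟩
    intro m hm
    have hmq : m ∈ q.support := q.support_takeUntil_subset hzq hm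
    have hmP : m ∈ (Walk.cons h01 q).support := by simp [support_cons, hmq]
    have hmu : m ≠ u₀.1 := fun hh => hu_not_q (hh ▸ hmq)
    have hmv : m ≠ v₀.1 := by
      intro hh
      subst hh
      have hnodup := hq_path.support_nodup
      rw [← q.take_spec hzq, support_append] at hnodup
      have hdisj := (List.nodup_append.mp hnodup).2.2
      have hv_in_tail : v₀.1 ∈ (q.dropUntil z hzq).support.tail := by
        have hvend : v₀.1 ∈ (q.dropUntil z hzq).support := end_mem_support _
        rw [support_eq_cons] at hvend
        rcases List.mem_cons.mp hvend with h1 | h1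
        · exact absurd h1.symm hzI.2.2
        · exact h1
      exact hdisj _ hm _ hv_in_tail rfl
    exact hint m hmP hmu hmv
  have hx1K : ¬ x₁ ∈ S.kept Y := hInotK x₁ hx1I
  rcases claimD x₁ hx1I hx1K with hcase | hcase
  · -- assign x₁ = u₀ : use the last interior vertex
    have hvne : v₀.1 ≠ u₀.1 := hne1.symm
    obtain ⟨y₁, h02, qr, hqr⟩ := Walk.exists_eq_cons_of_ne hvne (Walk.cons h01 q).reverse
    by_cases hy1 : y₁ = u₀.1
    · refine ⟨u₀.1.1, v₀.1.1, ?_, hfKu, hfKv⟩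
      have h02' := h02.symm
      rw [hy1] at h02'
      exact h02'
    · have hy1P : y₁ ∈ (Walk.cons h01 q).support := by
        have hh : y₁ ∈ (Walk.cons h01 q).reverse.support := by rw [hqr]; simp [support_cons]
        rwa [support_reverse, List.mem_reverse] at hh
      have hy1I : y₁ ∈ (Walk.cons h01 q).support ∧ y₁ ≠ u₀.1 ∧ y₁ ≠ v₀.1 :=
        ⟨hy1P, hy1, Ne.symm h02.ne⟩
      have hy1K : ¬ y₁ ∈ S.kept Y := hInotK y₁ hy1I
      have heqa : assign _ _ (esc_exists S Y) ⟨y₁, hy1K⟩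
          = assign _ _ (esc_exists S Y) ⟨x₁, hx1K⟩ :=
        (assign_eq_of_sconn (esc_exists S Y) (claimE y₁ hy1I)).symm
      have hfy : fW S Y e y₁.1 = some (e u₀) := by
        rw [fW_supp S Y e y₁ hy1K]
        exact congrArg (fun t => some (e t)) (Subtype.ext (heqa.trans hcase))
      exact ⟨y₁.1, v₀.1.1, h02.symm, hfy, hfKv⟩
  · -- assign x₁ = v₀ : use the first interior vertex
    have hfx : fW S Y e x₁.1 = some (e v₀) := by
      rw [fW_supp S Y e x₁ hx1K]
      exact congrArg (fun t => some (e t)) (Subtype.ext hcase)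
    exact ⟨u₀.1.1, x₁.1, h01, hfKu, hfx⟩

lemma fW_cross {a b : V'} (hab : G'.Adj a b) :
    ∃ w w', S.graph.Adj w w' ∧ fW S Y e w = some a ∧ fW S Y e w' = some b := by
  have hadj : (S.restrict Y).graph.Adj (e.symm a) (e.symm b) := by
    rw [Iso.map_adj_iff e.symm]
    exact hab
  have hadj2 : (SimpleGraph.fromRel (fun u v : ↥(S.kept Y) =>
    ∃ p : (S.graph.induce (S.steiner Y)).Walk u.1 v.1, p.IsPath ∧
      ∀ w ∈ p.support, w ≠ u.1 → w ≠ v.1 → w ∉ S.kept Y)).Adj (e.symm a) (e.symm b) := hadj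
  rw [SimpleGraph.fromRel_adj] at hadj2
  obtain ⟨hne, hrel⟩ := hadj2
  rcases hrel with ⟨p, hp, hintr⟩ | ⟨p, hp, hintr⟩
  · obtain ⟨w, w', hadj, h1, h2⟩ := cross_of_rel S Y e _ _ hne p hp hintr
    rw [RelIso.apply_symm_apply] at h1 h2
    exact ⟨w, w', hadj, h1, h2⟩
  · obtain ⟨w, w', hadj, h1, h2⟩ := cross_of_rel S Y e _ _ (Ne.symm hne) p hp hintr
    rw [RelIso.apply_symm_apply] at h1 h2
    exact ⟨w', w, hadj.symm, h2, h1⟩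

end PerTree

section Subdiv
variable {WW : Type} [Fintype WW]

noncomputable def vpos : WW → ℕ := fun w => (Fintype.equivFin WW w : ℕ)

lemma vpos_inj : Function.Injective (vpos (WW := WW)) := fun a b h =>
  (Fintype.equivFin WW).injective (Fin.ext h)

variable (T : SimpleGraph WW) (kk : ℕ)

/-- Oriented edges of `T`. -/
def ED : Type := {p : WW × WW // T.Adj p.1 p.2 ∧ vpos p.1 < vpos p.2}

/-- The subdivision of `T` in which every edge is subdivided into `kk` interior
nodes. -/
def HH : SimpleGraph (WW ⊕ (ED T × Fin kk)) :=
  SimpleGraph.fromRel (fun n n' =>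
    match n, n' with
    | Sum.inl u, Sum.inr (ee, j) =>
        (ee.1.1 = u ∧ (j : ℕ) = 0) ∨ (ee.1.2 = u ∧ (j : ℕ) = kk - 1)
    | Sum.inr (ee, j), Sum.inr (ee', j') => ee = ee' ∧ (j' : ℕ) = (j : ℕ) + 1
    | _, _ => False)

lemma HH_adj_bot (ee : ED T) (j : Fin kk) (hj : (j : ℕ) = 0) :
    (HH T kk).Adj (Sum.inl ee.1.1) (Sum.inr (ee, j)) := by
  rw [HH, SimpleGraph.fromRel_adj]
  exact ⟨by simp, Or.inl (Or.inl ⟨rfl, hj⟩)⟩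

lemma HH_adj_top (ee : ED T) (j : Fin kk) (hj : (j : ℕ) = kk - 1) :
    (HH T kk).Adj (Sum.inl ee.1.2) (Sum.inr (ee, j)) := by
  rw [HH, SimpleGraph.fromRel_adj]
  exact ⟨by simp, Or.inl (Or.inr ⟨rfl, hj⟩)⟩

lemma HH_adj_chain (ee : ED T) (j j' : Fin kk) (h : (j' : ℕ) = (j : ℕ) + 1) :
    (HH T kk).Adj (Sum.inr (ee, j)) (Sum.inr (ee, j')) := by
  rw [HH, SimpleGraph.fromRel_adj]
  refine ⟨?_, Or.inl ⟨rfl, h⟩⟩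
  intro hc
  have : j = j' := by
    have := (Sum.inr.inj hc)
    exact (Prod.mk.injEq _ _ _ _ ▸ this).2
  omega

lemma HH_adj_cases {n n' : WW ⊕ (ED T × Fin kk)} (h : (HH T kk).Adj n n') :
    (∃ (ee : ED T) (j : Fin kk),
      ((j : ℕ) = 0 ∧ ((n = Sum.inl ee.1.1 ∧ n' = Sum.inr (ee, j)) ∨
        (n' = Sum.inl ee.1.1 ∧ n = Sum.inr (ee, j)))) ∨
      ((j : ℕ) = kk - 1 ∧ ((n = Sum.inl ee.1.2 ∧ n' = Sum.inr (ee, j)) ∨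
        (n' = Sum.inl ee.1.2 ∧ n = Sum.inr (ee, j))))) ∨
    (∃ (ee : ED T) (j j' : Fin kk), (j' : ℕ) = (j : ℕ) + 1 ∧
      ((n = Sum.inr (ee, j) ∧ n' = Sum.inr (ee, j')) ∨
        (n' = Sum.inr (ee, j) ∧ n = Sum.inr (ee, j')))) := by
  rw [HH, SimpleGraph.fromRel_adj] at h
  obtain ⟨-, h⟩ := h
  rcases n with u | ⟨ee, j⟩ <;> rcases n' with u' | ⟨ee', j'⟩
  · simp at h
  · rcases h with h | h
    · rcases h with ⟨h1, h2⟩ | ⟨h1, h2⟩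
      · exact Or.inl ⟨ee', j', Or.inl ⟨h2, Or.inl ⟨by rw [h1], rfl⟩⟩⟩
      · exact Or.inl ⟨ee', j', Or.inr ⟨h2, Or.inl ⟨by rw [h1], rfl⟩⟩⟩
    · simp at h
  · rcases h with h | h
    · simp at h
    · rcases h with ⟨h1, h2⟩ | ⟨h1, h2⟩
      · exact Or.inl ⟨ee, j, Or.inl ⟨h2, Or.inr ⟨by rw [h1], rfl⟩⟩⟩
      · exact Or.inl ⟨ee, j, Or.inr ⟨h2, Or.inr ⟨by rw [h1], rfl⟩⟩⟩
  · rcases h with ⟨h1, h2⟩ | ⟨h1, h2⟩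
    · exact Or.inr ⟨ee, j, j', h2, Or.inl ⟨rfl, by rw [h1]⟩⟩
    · exact Or.inr ⟨ee, j', j, h2, Or.inr ⟨by rw [h1], rfl⟩⟩

lemma chain_walk_down (ee : ED T) : ∀ (m : ℕ) (j : Fin kk), (j : ℕ) = m →
    ∃ q : (HH T kk).Walk (Sum.inr (ee, j)) (Sum.inl ee.1.1),
      ∀ n ∈ q.support, n = Sum.inl ee.1.1 ∨
        ∃ j' : Fin kk, (j' : ℕ) ≤ (j : ℕ) ∧ n = Sum.inr (ee, j') := by
  intro m
  induction m with
  | zero =>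
    intro j hj
    refine ⟨Walk.cons ((HH_adj_bot T kk ee j hj).symm) Walk.nil, ?_⟩
    intro n hn
    rw [support_cons, List.mem_cons] at hn
    rcases hn with rfl | hn
    · exact Or.inr ⟨j, le_refl _, rfl⟩
    · rw [support_nil, List.mem_singleton] at hn
      exact Or.inl hn
  | succ m ih =>
    intro j hj
    have hm : m < kk := by have := j.2; omega
    obtain ⟨q, hq⟩ := ih ⟨m, hm⟩ rfl
    refine ⟨Walk.cons ((HH_adj_chain T kk ee ⟨m, hm⟩ j (by simp [hj])).symm) q, ?_⟩
    intro n hn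
    rw [support_cons, List.mem_cons] at hn
    rcases hn with rfl | hn
    · exact Or.inr ⟨j, le_refl _, rfl⟩
    · rcases hq n hn with h | ⟨j', hj', rfl⟩
      · exact Or.inl h
      · exact Or.inr ⟨j', by simp at hj' ⊢; omega, rfl⟩

lemma chain_walk_up (ee : ED T) : ∀ (m : ℕ) (j : Fin kk), m = kk - 1 - (j : ℕ) →
    ∃ q : (HH T kk).Walk (Sum.inr (ee, j)) (Sum.inl ee.1.2),
      ∀ n ∈ q.support, n = Sum.inl ee.1.2 ∨
        ∃ j' : Fin kk, (j : ℕ) ≤ (j' : ℕ) ∧ n = Sum.inr (ee, j') := by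
  intro m
  induction m with
  | zero =>
    intro j hj
    have hjv : (j : ℕ) = kk - 1 := by have := j.2; omega
    refine ⟨Walk.cons ((HH_adj_top T kk ee j hjv).symm) Walk.nil, ?_⟩
    intro n hn
    rw [support_cons, List.mem_cons] at hn
    rcases hn with rfl | hn
    · exact Or.inr ⟨j, le_refl _, rfl⟩
    · rw [support_nil, List.mem_singleton] at hn
      exact Or.inl hn
  | succ m ih =>
    intro j hj
    have hlt : (j : ℕ) + 1 < kk := by have := j.2; omega
    obtain ⟨q, hq⟩ := ih ⟨(j : ℕ) + 1, hlt⟩ (by simp; omega)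
    refine ⟨Walk.cons (HH_adj_chain T kk ee j ⟨(j : ℕ) + 1, hlt⟩ rfl) q, ?_⟩
    intro n hn
    rw [support_cons, List.mem_cons] at hn
    rcases hn with rfl | hn
    · exact Or.inr ⟨j, le_refl _, rfl⟩
    · rcases hq n hn with h | ⟨j', hj', rfl⟩
      · exact Or.inl h
      · exact Or.inr ⟨j', by simp at hj'; omega, rfl⟩

lemma edge_walk (hkk : 0 < kk) {u v : WW} (huv : T.Adj u v) :
    ∃ q : (HH T kk).Walk (Sum.inl u) (Sum.inl v),
      ∀ n ∈ q.support, n = Sum.inl u ∨ n = Sum.inl v ∨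
        ∃ (ee : ED T) (j : Fin kk), n = Sum.inr (ee, j) ∧
          ((ee.1.1 = u ∧ ee.1.2 = v) ∨ (ee.1.1 = v ∧ ee.1.2 = u)) := by
  rcases lt_trichotomy (vpos u) (vpos v) with hlt | heq | hgt
  · obtain ⟨q, hq⟩ := chain_walk_up T kk ⟨(u, v), huv, hlt⟩ (kk - 1) ⟨0, hkk⟩ (by simp)
    refine ⟨Walk.cons (HH_adj_bot T kk ⟨(u, v), huv, hlt⟩ ⟨0, hkk⟩ rfl) q, ?_⟩
    intro n hn
    rw [support_cons, List.mem_cons] at hn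
    rcases hn with rfl | hn
    · exact Or.inl rfl
    · rcases hq n hn with h | ⟨j', _, rfl⟩
      · exact Or.inr (Or.inl h)
      · exact Or.inr (Or.inr ⟨_, j', rfl, Or.inl ⟨rfl, rfl⟩⟩)
  · exact absurd (vpos_inj heq) huv.ne
  · obtain ⟨q, hq⟩ := chain_walk_up T kk ⟨(v, u), huv.symm, hgt⟩ (kk - 1) ⟨0, hkk⟩ (by simp)
    refine ⟨(Walk.cons (HH_adj_bot T kk ⟨(v, u), huv.symm, hgt⟩ ⟨0, hkk⟩ rfl) q).reverse, ?_⟩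
    intro n hn
    rw [support_reverse, List.mem_reverse, support_cons, List.mem_cons] at hn
    rcases hn with rfl | hn
    · exact Or.inr (Or.inl rfl)
    · rcases hq n hn with h | ⟨j', _, rfl⟩
      · exact Or.inl h
      · exact Or.inr (Or.inr ⟨_, j', rfl, Or.inr ⟨rfl, rfl⟩⟩)

lemma lift_walk (hkk : 0 < kk) : ∀ {u v : WW} (p : T.Walk u v),
    ∃ q : (HH T kk).Walk (Sum.inl u) (Sum.inl v),
      ∀ n ∈ q.support, (∃ x ∈ p.support, n = Sum.inl x) ∨
        ∃ (ee : ED T) (j : Fin kk), n = Sum.inr (ee, j) ∧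
          ee.1.1 ∈ p.support ∧ ee.1.2 ∈ p.support := by
  intro u v p
  induction p with
  | nil => exact ⟨Walk.nil, by simp⟩
  | @cons u m v h rest ih =>
    obtain ⟨q1, hq1⟩ := edge_walk T kk hkk h
    obtain ⟨q2, hq2⟩ := ih
    refine ⟨q1.append q2, ?_⟩
    intro n hn
    rw [mem_support_append_iff] at hn
    rcases hn with hn | hn
    · rcases hq1 n hn with rfl | rfl | ⟨ee, j, rfl, hee⟩
      · exact Or.inl ⟨u, by simp [support_cons], rfl⟩
      · exact Or.inl ⟨m, by simp [support_cons], rfl⟩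
      · refine Or.inr ⟨ee, j, rfl, ?_, ?_⟩ <;> rcases hee with ⟨h1, h2⟩ | ⟨h1, h2⟩ <;>
          simp [support_cons, h1, h2]
    · rcases hq2 n hn with ⟨x, hx, rfl⟩ | ⟨ee, j, rfl, hx1, hx2⟩
      · exact Or.inl ⟨x, by simp [support_cons, hx], rfl⟩
      · exact Or.inr ⟨ee, j, rfl, by simp [support_cons, hx1], by simp [support_cons, hx2]⟩

lemma HH_conn (hkk : 0 < kk) (hT : T.Connected) : (HH T kk).Connected := by
  have hreach : ∀ n : WW ⊕ (ED T × Fin kk), ∃ w, (HH T kk).Reachable n (Sum.inl w) := by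
    intro n
    rcases n with w | ⟨ee, j⟩
    · exact ⟨w, Reachable.refl _⟩
    · obtain ⟨q, -⟩ := chain_walk_down T kk ee (j : ℕ) j rfl
      exact ⟨ee.1.1, ⟨q⟩⟩
  rw [connected_iff]
  refine ⟨fun n n' => ?_, ⟨Sum.inl hT.nonempty.some⟩⟩
  obtain ⟨w, hw⟩ := hreach n
  obtain ⟨w', hw'⟩ := hreach n'
  have hmid : (HH T kk).Reachable (Sum.inl w) (Sum.inl w') := by
    obtain ⟨p⟩ := hT w w'
    obtain ⟨q, -⟩ := lift_walk T kk hkk p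
    exact ⟨q⟩
  exact hw.trans (hmid.trans hw'.symm)

/-- The cut at position `pp` (in `0..kk`) of the chain of `ee₀`. -/
def cutF (ee₀ : ED T) (pp : ℕ) : WW ⊕ (ED T × Fin kk) → Prop :=
  Sum.elim (fun w => (T.deleteEdges {s(ee₀.1.1, ee₀.1.2)}).Reachable w ee₀.1.2)
    (fun ej => (ej.1 = ee₀ ∧ pp ≤ (ej.2 : ℕ)) ∨
      (ej.1 ≠ ee₀ ∧ (T.deleteEdges {s(ee₀.1.1, ee₀.1.2)}).Reachable ej.1.1.1 ee₀.1.2))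

lemma cutF_inl (ee₀ : ED T) (pp : ℕ) (w : WW) :
    cutF T kk ee₀ pp (Sum.inl w) ↔
      (T.deleteEdges {s(ee₀.1.1, ee₀.1.2)}).Reachable w ee₀.1.2 := Iff.rfl

lemma cutF_inr_eq (ee₀ : ED T) (pp : ℕ) (j : Fin kk) :
    cutF T kk ee₀ pp (Sum.inr (ee₀, j)) ↔ pp ≤ (j : ℕ) := by
  constructor
  · rintro (⟨-, h⟩ | ⟨hne, -⟩)
    · exact h
    · exact absurd rfl hne
  · exact fun h => Or.inl ⟨rfl, h⟩

lemma cutF_inr_ne {ee ee₀ : ED T} (hne : ee ≠ ee₀) (pp : ℕ) (j : Fin kk) :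
    cutF T kk ee₀ pp (Sum.inr (ee, j)) ↔
      (T.deleteEdges {s(ee₀.1.1, ee₀.1.2)}).Reachable ee.1.1 ee₀.1.2 := by
  constructor
  · rintro (⟨heq, -⟩ | ⟨-, h⟩)
    · exact absurd heq hne
    · exact h
  · exact fun h => Or.inr ⟨hne, h⟩

lemma ED_eq_of_sym2 {ee ee' : ED T}
    (h : s(ee.1.1, ee.1.2) = s(ee'.1.1, ee'.1.2)) : ee = ee' := by
  rw [Sym2.eq_iff] at h
  rcases h with ⟨h1, h2⟩ | ⟨h1, h2⟩
  · exact Subtype.ext (Prod.ext h1 h2)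
  · exfalso
    have ha := ee.2.2
    have hb := ee'.2.2
    rw [h1, h2] at ha
    omega

lemma cut_not_u (hT : T.IsAcyclic) (ee₀ : ED T) :
    ¬ (T.deleteEdges {s(ee₀.1.1, ee₀.1.2)}).Reachable ee₀.1.1 ee₀.1.2 := by
  have hb := (isAcyclic_iff_forall_adj_isBridge.mp hT) ee₀.2.1
  rw [isBridge_iff] at hb
  exact hb

lemma cut_adj (ee₀ : ED T) {a b : WW} (hab : T.Adj a b)
    (hne : s(a, b) ≠ s(ee₀.1.1, ee₀.1.2)) :
    ((T.deleteEdges {s(ee₀.1.1, ee₀.1.2)}).Reachable a ee₀.1.2 ↔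
      (T.deleteEdges {s(ee₀.1.1, ee₀.1.2)}).Reachable b ee₀.1.2) := by
  have hadj : (T.deleteEdges {s(ee₀.1.1, ee₀.1.2)}).Adj a b := by
    rw [deleteEdges_adj]
    exact ⟨hab, by simpa using hne⟩
  exact ⟨fun h => hadj.symm.reachable.trans h, fun h => hadj.reachable.trans h⟩

lemma cut_cross_eq (hT : T.IsAcyclic) (ee₀ : ED T) (pp : ℕ) (hpp : pp ≤ kk)
    {m m' : WW ⊕ (ED T × Fin kk)} (hadj : (HH T kk).Adj m m')
    (h1 : ¬ cutF T kk ee₀ pp m) (h2 : cutF T kk ee₀ pp m') :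
    (pp = 0 ∧ m = Sum.inl ee₀.1.1 ∧ ∃ j : Fin kk, (j : ℕ) = 0 ∧ m' = Sum.inr (ee₀, j)) ∨
    (pp = kk ∧ m' = Sum.inl ee₀.1.2 ∧ ∃ j : Fin kk, (j : ℕ) = kk - 1 ∧ m = Sum.inr (ee₀, j)) ∨
    (0 < pp ∧ pp < kk ∧ ∃ (j j' : Fin kk), (j : ℕ) = pp - 1 ∧ (j' : ℕ) = pp ∧
      m = Sum.inr (ee₀, j) ∧ m' = Sum.inr (ee₀, j')) := by
  rcases HH_adj_cases T kk hadj with ⟨ee, j, ⟨hj, hor⟩ | ⟨hj, hor⟩⟩ | ⟨ee, j, j', hjj, hor⟩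
  · -- bottom edge of chain ee
    by_cases hee : ee = ee₀
    · subst hee
      rcases hor with ⟨rfl, rfl⟩ | ⟨rfl, rfl⟩
      · rw [cutF_inr_eq] at h2
        exact Or.inl ⟨by omega, rfl, j, hj, rfl⟩
      · rw [cutF_inl] at h2
        exact absurd h2 (cut_not_u T hT ee)
    · rcases hor with ⟨rfl, rfl⟩ | ⟨rfl, rfl⟩
      · rw [cutF_inl] at h1
        rw [cutF_inr_ne T kk hee] at h2
        exact absurd h2 h1
      · rw [cutF_inl] at h2
        rw [cutF_inr_ne T kk hee] at h1
        exact absurd h2 h1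
  · -- top edge of chain ee
    by_cases hee : ee = ee₀
    · subst hee
      rcases hor with ⟨rfl, rfl⟩ | ⟨rfl, rfl⟩
      · rw [cutF_inl] at h1
        exact absurd (Reachable.refl _) h1
      · rw [cutF_inr_eq] at h1
        refine Or.inr (Or.inl ⟨?_, rfl, j, hj, rfl⟩)
        omega
    · have hR : ¬ s(ee.1.1, ee.1.2) = s(ee₀.1.1, ee₀.1.2) :=
        fun hc => hee (ED_eq_of_sym2 T hc)
      have hiff := cut_adj T ee₀ ee.2.1 hR
      rcases hor with ⟨rfl, rfl⟩ | ⟨rfl, rfl⟩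
      · rw [cutF_inl] at h1
        rw [cutF_inr_ne T kk hee] at h2
        exact absurd (hiff.mp h2) h1
      · rw [cutF_inl] at h2
        rw [cutF_inr_ne T kk hee] at h1
        exact absurd (hiff.mpr h2) h1
  · -- chain edge
    by_cases hee : ee = ee₀
    · subst hee
      rcases hor with ⟨rfl, rfl⟩ | ⟨rfl, rfl⟩
      · rw [cutF_inr_eq] at h1 h2
        refine Or.inr (Or.inr ⟨by omega, by have := j'.2; omega, j, j', by omega, by omega,
          rfl, rfl⟩)
      · rw [cutF_inr_eq] at h1 h2
        omega
    · rcases hor with ⟨rfl, rfl⟩ | ⟨rfl, rfl⟩ <;>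
        · rw [cutF_inr_ne T kk hee] at h1 h2
          exact absurd h2 h1

lemma bridge_of_cut {α : Type} {G : SimpleGraph α} {n n' : α} (c : α → Prop)
    (hn : ¬ c n) (hn' : c n')
    (huniq : ∀ m m', G.Adj m m' → ¬ c m → c m' → s(m, m') = s(n, n')) :
    ∀ p : G.Walk n n', s(n, n') ∈ p.edges := by
  intro p
  obtain ⟨d, hd, h1, h2⟩ := exists_crossing_dart c p hn hn'
  have heq := huniq d.fst d.snd d.adj h1 h2
  have hmem : d.edge ∈ p.edges := List.mem_map_of_mem hd
  rwa [show d.edge = s(d.fst, d.snd) from rfl, heq] at hmem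

lemma bridge_of_cut' {α : Type} {G : SimpleGraph α} {n n' : α} (c : α → Prop)
    (hn : c n) (hn' : ¬ c n')
    (huniq : ∀ m m', G.Adj m m' → ¬ c m → c m' → s(m, m') = s(n', n)) :
    ∀ p : G.Walk n n', s(n, n') ∈ p.edges := by
  intro p
  obtain ⟨d, hd, h1, h2⟩ := exists_crossing_dart c p.reverse hn' hn
  have heq := huniq d.fst d.snd d.adj h1 h2
  have hmem : d.edge ∈ p.reverse.edges := List.mem_map_of_mem hd
  rw [show d.edge = s(d.fst, d.snd) from rfl, heq] at hmem
  rw [edges_reverse, List.mem_reverse] at hmem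
  rwa [Sym2.eq_swap] at hmem

lemma HH_isTree (hkk : 0 < kk) (hT : T.IsTree) : (HH T kk).IsTree := by
  refine ⟨HH_conn T kk hkk hT.isConnected, ?_⟩
  rw [isAcyclic_iff_forall_adj_isBridge]
  intro n n' hadj
  rw [isBridge_iff_adj_and_forall_walk_mem_edges]
  have hacy := hT.IsAcyclic
  rcases HH_adj_cases T kk hadj with ⟨ee, j, ⟨hj, hor⟩ | ⟨hj, hor⟩⟩ | ⟨ee, j, j', hjj, hor⟩
  · -- bottom edge: pp = 0, false node inl ee.1.1, true node inr (ee,j)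
    have hcl : ¬ cutF T kk ee 0 (Sum.inl ee.1.1) := by
      rw [cutF_inl]; exact cut_not_u T hacy ee
    have hcr : cutF T kk ee 0 (Sum.inr (ee, j)) := by
      rw [cutF_inr_eq]; omega
    have huniq : ∀ m m', (HH T kk).Adj m m' → ¬ cutF T kk ee 0 m → cutF T kk ee 0 m' →
        s(m, m') = s(Sum.inl ee.1.1, (Sum.inr (ee, j) : WW ⊕ (ED T × Fin kk))) := by
      intro m m' hmm h1 h2
      rcases cut_cross_eq T kk hacy ee 0 (Nat.zero_le _) hmm h1 h2 with
        ⟨-, rfl, j2, hj2, rfl⟩ | ⟨h0, -⟩ | ⟨h0, -⟩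
      · have hj2j : j2 = j := by apply Fin.ext; rw [hj2, hj]
        rw [hj2j]
      · exact absurd h0 (by omega)
      · exact absurd h0 (lt_irrefl 0)
    rcases hor with ⟨rfl, rfl⟩ | ⟨rfl, rfl⟩
    · exact bridge_of_cut _ hcl hcr huniq
    · exact bridge_of_cut' _ hcr hcl huniq
  · -- top edge: pp = kk, false node inr (ee,j), true node inl ee.1.2
    have hcl : cutF T kk ee kk (Sum.inl ee.1.2) := by
      rw [cutF_inl]
    have hcr : ¬ cutF T kk ee kk (Sum.inr (ee, j)) := by
      rw [cutF_inr_eq]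
      have := j.2; omega
    have huniq : ∀ m m', (HH T kk).Adj m m' → ¬ cutF T kk ee kk m → cutF T kk ee kk m' →
        s(m, m') = s((Sum.inr (ee, j) : WW ⊕ (ED T × Fin kk)), Sum.inl ee.1.2) := by
      intro m m' hmm h1 h2
      rcases cut_cross_eq T kk hacy ee kk (le_refl _) hmm h1 h2 with
        ⟨h0, -⟩ | ⟨-, rfl, j2, hj2, rfl⟩ | ⟨-, h0, -⟩
      · exact absurd h0 hkk.ne'
      · have hj2j : j2 = j := by apply Fin.ext; rw [hj2, hj]
        rw [hj2j]
      · exact absurd h0 (lt_irrefl kk)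
    rcases hor with ⟨rfl, rfl⟩ | ⟨rfl, rfl⟩
    · exact bridge_of_cut' _ hcl hcr huniq
    · exact bridge_of_cut _ hcr hcl huniq
  · -- chain edge: pp = j', false node inr (ee,j), true node inr (ee,j')
    have hppkk : (j' : ℕ) ≤ kk := le_of_lt j'.2
    have hcl : ¬ cutF T kk ee (j' : ℕ) (Sum.inr (ee, j)) := by
      rw [cutF_inr_eq]; omega
    have hcr : cutF T kk ee (j' : ℕ) (Sum.inr (ee, j')) := by
      rw [cutF_inr_eq]
    have huniq : ∀ m m', (HH T kk).Adj m m' → ¬ cutF T kk ee (j' : ℕ) m →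
        cutF T kk ee (j' : ℕ) m' →
        s(m, m') = s((Sum.inr (ee, j) : WW ⊕ (ED T × Fin kk)), Sum.inr (ee, j')) := by
      intro m m' hmm h1 h2
      rcases cut_cross_eq T kk hacy ee (j' : ℕ) hppkk hmm h1 h2 with
        ⟨h0, -⟩ | ⟨h0, -⟩ | ⟨-, -, j2, j2', hj2, hj2', rfl, rfl⟩
      · omega
      · have := j'.2; omega
      · have e1 : j2 = j := by apply Fin.ext; omega
        have e2 : j2' = j' := by apply Fin.ext; omega
        rw [e1, e2]
    rcases hor with ⟨rfl, rfl⟩ | ⟨rfl, rfl⟩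
    · exact bridge_of_cut _ hcl hcr huniq
    · exact bridge_of_cut' _ hcr hcl huniq

end Subdiv

section Coh
variable {WW A : Type} [Fintype WW] (T : SimpleGraph WW) (kk : ℕ)

/-- The defining clause for membership of the class of `(i, a)` in a bag. -/
def clauseP (f : WW → Option A) (a : A) (i : Fin kk) : WW ⊕ (ED T × Fin kk) → Prop :=
  Sum.elim (fun w => f w = some a)
    (fun ej => ((ej.2 : ℕ) ≤ (i : ℕ) ∧ f ej.1.1.1 = some a) ∨
      ((i : ℕ) ≤ (ej.2 : ℕ) ∧ f ej.1.1.2 = some a))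

lemma clause_walk (hkk : 0 < kk) (f : WW → Option A) (a : A) (w₀ : WW)
    (hfiber : ∀ w, f w = some a → ∃ q : T.Walk w w₀, ∀ z ∈ q.support, f z = some a)
    (i : Fin kk) :
    ∀ n, clauseP T kk f a i n →
      ∃ qh : (HH T kk).Walk n (Sum.inl w₀),
        ∀ m ∈ qh.support, clauseP T kk f a i m := by
  have hinl : ∀ w, f w = some a →
      ∃ qh : (HH T kk).Walk (Sum.inl w) (Sum.inl w₀),
        ∀ m ∈ qh.support, clauseP T kk f a i m := by
    intro w hw
    obtain ⟨qs, hqs⟩ := hfiber w hw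
    obtain ⟨qh, hqh⟩ := lift_walk T kk hkk qs
    refine ⟨qh, ?_⟩
    intro m hm
    rcases hqh m hm with ⟨x, hx, rfl⟩ | ⟨ee, j, rfl, h1, h2⟩
    · exact hqs x hx
    · rcases le_total (j : ℕ) (i : ℕ) with h | h
      · exact Or.inl ⟨h, hqs _ h1⟩
      · exact Or.inr ⟨h, hqs _ h2⟩
  intro n hn
  rcases n with w | ⟨ee, j⟩
  · exact hinl w hn
  · rcases hn with ⟨hji, hf⟩ | ⟨hij, hf⟩
    · obtain ⟨q1, hq1⟩ := chain_walk_down T kk ee (j : ℕ) j rfl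
      obtain ⟨q2, hq2⟩ := hinl ee.1.1 hf
      refine ⟨q1.append q2, ?_⟩
      intro m hm
      rw [mem_support_append_iff] at hm
      rcases hm with hm | hm
      · rcases hq1 m hm with rfl | ⟨j', hj', rfl⟩
        · exact hf
        · exact Or.inl ⟨le_trans hj' hji, hf⟩
      · exact hq2 m hm
    · obtain ⟨q1, hq1⟩ := chain_walk_up T kk ee (kk - 1 - (j : ℕ)) j rfl
      obtain ⟨q2, hq2⟩ := hinl ee.1.2 hf
      refine ⟨q1.append q2, ?_⟩
      intro m hm
      rw [mem_support_append_iff] at hm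
      rcases hm with hm | hm
      · rcases hq1 m hm with rfl | ⟨j', hj', rfl⟩
        · exact hf
        · exact Or.inr ⟨le_trans hij hj', hf⟩
      · exact hq2 m hm

end Coh

lemma card_opt_fin {Q ι : Type} [Fintype ι] (g : ι → Option Q) :
    {q | ∃ i, g i = some q}.Finite ∧
      {q | ∃ i, g i = some q}.ncard ≤ Fintype.card ι := by
  classical
  have hset : {q | ∃ i, g i = some q} = Option.some ⁻¹' (Set.range g) := by
    ext q
    simp [Set.mem_preimage, Set.mem_range]
  rw [hset]
  have hfin : (Option.some ⁻¹' (Set.range g)).Finite :=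
    Set.Finite.preimage (Set.injOn_of_injective (Option.some_injective _))
      (Set.finite_range g)
  refine ⟨hfin, ?_⟩
  calc (Option.some ⁻¹' (Set.range g)).ncard
      = (Option.some '' (Option.some ⁻¹' (Set.range g))).ncard :=
        (Set.ncard_image_of_injective _ (Option.some_injective _)).symm
    _ ≤ (Set.range g).ncard :=
        Set.ncard_le_ncard (Set.image_preimage_subset _ _) (Set.finite_range g)
    _ ≤ Fintype.card ι := by
        rw [← Set.image_univ]
        exact (Set.ncard_image_le Set.finite_univ).trans
          (le_of_eq (by rw [Set.ncard_univ, Nat.card_eq_fintype_card]))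


end BL

/-- Bryant–Lagergren: if a collection of `k` unrooted phylogenetic
trees admits a strictly compatible supertree, then its display graph has treewidth
at most `k`. -/
theorem displayGraph_treewidth_le_of_strictlyCompatible
    {k : ℕ} {X : Type} {V : Fin k → Type} [∀ i, Fintype (V i)]
    (trees : ∀ i, UPT (V i) X)
    (hcomp : ∃ (W : Type) (_ : Fintype W) (S : UPT W X), IsStrictSupertree trees S) :
    TreewidthAtMost (displayGraph trees) k := by
  classical
  obtain ⟨W, instW, S, hlabels, hiso⟩ := hcomp
  letI := instW
  rcases Nat.eq_zero_or_pos k with rfl | hk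
  · -- no trees: the display graph is empty
    refine ⟨PUnit, ⟨⊥, ⟨?_, isAcyclic_bot⟩, fun _ => ∅, ?_, ?_, ?_⟩, ?_⟩
    · rw [connected_iff]
      exact ⟨fun a b => by rw [Subsingleton.elim a b], ⟨PUnit.unit⟩⟩
    · intro v
      induction v using Quotient.ind with
      | _ s => exact s.1.elim0
    · intro u v h
      induction u using Quotient.ind with
      | _ s => exact s.1.elim0
    · intro v
      induction v using Quotient.ind with
      | _ s => exact s.1.elim0
    · intro t
      simp
  -- main case
  choose e he using hiso
  have hanchor : ∀ (i : Fin k) (a : V i),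
      (trees i).lab a = S.lab (BL.iW S (trees i).labels (e i) a) := by
    intro i a
    have h1 := he i ((e i).symm a)
    rw [RelIso.apply_symm_apply] at h1
    exact h1
  set BAG : W ⊕ (BL.ED S.graph × Fin k) → Set (Quotient (dispSetoid trees)) :=
    fun n => {q | ∃ (i : Fin k) (a : V i), BL.clauseP S.graph k
      (BL.fW S (trees i).labels (e i)) a i n ∧
      q = Quotient.mk (dispSetoid trees) ⟨i, a⟩} with hBAG
  have hbag_mem : ∀ (n) (i : Fin k) (a : V i),
      BL.clauseP S.graph k (BL.fW S (trees i).labels (e i)) a i n →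
      Quotient.mk (dispSetoid trees) ⟨i, a⟩ ∈ BAG n := by
    intro n i a h
    rw [hBAG]
    exact ⟨i, a, h, rfl⟩
  have hbag_elim : ∀ (n) (q), q ∈ BAG n → ∃ (i : Fin k) (a : V i),
      BL.clauseP S.graph k (BL.fW S (trees i).labels (e i)) a i n ∧
      q = Quotient.mk (dispSetoid trees) ⟨i, a⟩ := by
    intro n q h
    rw [hBAG] at h
    exact h
  refine ⟨W ⊕ (BL.ED S.graph × Fin k),
    ⟨BL.HH S.graph k, BL.HH_isTree S.graph k hk S.isTree, BAG, ?_, ?_, ?_⟩, ?_⟩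
  · -- covers_vertex
    intro v
    induction v using Quotient.ind with
    | _ s =>
      obtain ⟨i, a⟩ := s
      exact ⟨Sum.inl (BL.iW S (trees i).labels (e i) a),
        hbag_mem _ i a (BL.fW_iW S (trees i).labels (e i) a)⟩
  · -- covers_edge
    intro q1 q2 h
    have h' : (SimpleGraph.fromRel (fun q1 q2 => ∃ (i : Fin k) (u v : V i),
        (trees i).graph.Adj u v ∧ q1 = Quotient.mk (dispSetoid trees) ⟨i, u⟩ ∧
          q2 = Quotient.mk (dispSetoid trees) ⟨i, v⟩)).Adj q1 q2 := h
    rw [SimpleGraph.fromRel_adj] at h'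
    obtain ⟨-, hrel⟩ := h'
    have key : ∀ (qa qb : Quotient (dispSetoid trees)),
        (∃ (i : Fin k) (u v : V i), (trees i).graph.Adj u v ∧
          qa = Quotient.mk (dispSetoid trees) ⟨i, u⟩ ∧
          qb = Quotient.mk (dispSetoid trees) ⟨i, v⟩) →
        ∃ t, qa ∈ BAG t ∧ qb ∈ BAG t := by
      rintro qa qb ⟨i, a, b, hab, hqa, hqb⟩
      subst hqa
      subst hqb
      obtain ⟨w, w', hww, hfa, hfb⟩ := BL.fW_cross S (trees i).labels (e i)
        (show ((trees i).toLG).graph.Adj a b from hab)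
      rcases lt_trichotomy (BL.vpos w) (BL.vpos w') with hlt | heqq | hgt
      · exact ⟨Sum.inr (⟨(w, w'), hww, hlt⟩, i),
          hbag_mem _ i a (Or.inl ⟨le_refl _, hfa⟩),
          hbag_mem _ i b (Or.inr ⟨le_refl _, hfb⟩)⟩
      · exact absurd (BL.vpos_inj heqq) hww.ne
      · exact ⟨Sum.inr (⟨(w', w), hww.symm, hgt⟩, i),
          hbag_mem _ i a (Or.inr ⟨le_refl _, hfa⟩),
          hbag_mem _ i b (Or.inl ⟨le_refl _, hfb⟩)⟩
    rcases hrel with hrel | hrel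
    · exact key q1 q2 hrel
    · obtain ⟨t, h1, h2⟩ := key q2 q1 hrel
      exact ⟨t, h2, h1⟩
  · -- coherent
    intro v
    induction v using Quotient.ind with
    | _ s =>
      obtain ⟨i0, a0⟩ := s
      rw [connected_iff]
      constructor
      · rintro ⟨n, hn⟩ ⟨n', hn'⟩
        obtain ⟨i, a, hcl, hv⟩ := hbag_elim n _ hn
        obtain ⟨i', a', hcl', hv'⟩ := hbag_elim n' _ hn'
        obtain ⟨q1, hq1⟩ := BL.clause_walk S.graph k hk _ a
          (BL.iW S (trees i).labels (e i) a)
          (fun w hw => BL.fiber_walk S (trees i).labels (e i) hw) i n hcl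
        obtain ⟨q2, hq2⟩ := BL.clause_walk S.graph k hk _ a'
          (BL.iW S (trees i').labels (e i') a')
          (fun w hw => BL.fiber_walk S (trees i').labels (e i') hw) i' n' hcl'
        have hanch : BL.iW S (trees i).labels (e i) a
            = BL.iW S (trees i').labels (e i') a' := by
          have hqe := Quotient.exact (hv.symm.trans hv')
          rcases hqe with heq | ⟨x, hx1, hx2⟩
          · injection heq with h1 h2
            subst h1
            have h2' := eq_of_heq h2
            subst h2'
            rfl
          · refine S.lab_inj _ _ x ?_ ?_
            · rw [← hanchor i a]; exact hx1
            · rw [← hanchor i' a']; exact hx2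
        have hm1 : Sum.inl (BL.iW S (trees i).labels (e i) a) ∈
            {t | Quotient.mk (dispSetoid trees) ⟨i0, a0⟩ ∈ BAG t} := by
          rw [Set.mem_setOf_eq, hv]
          exact hbag_mem _ i a (BL.fW_iW S (trees i).labels (e i) a)
        have hm2 : Sum.inl (BL.iW S (trees i').labels (e i') a') ∈
            {t | Quotient.mk (dispSetoid trees) ⟨i0, a0⟩ ∈ BAG t} := by
          rw [Set.mem_setOf_eq, hv']
          exact hbag_mem _ i' a' (BL.fW_iW S (trees i').labels (e i') a')
        obtain ⟨r1, -⟩ := BL.walk_toInduce q1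
          (fun m hm => by
            rw [Set.mem_setOf_eq, hv]
            exact hbag_mem _ i a (hq1 m hm)) hn hm1
        obtain ⟨r2, -⟩ := BL.walk_toInduce q2
          (fun m hm => by
            rw [Set.mem_setOf_eq, hv']
            exact hbag_mem _ i' a' (hq2 m hm)) hn' hm2
        refine Reachable.trans ⟨r1⟩ ?_
        have hsub : (⟨Sum.inl (BL.iW S (trees i).labels (e i) a), hm1⟩ :
            {t // Quotient.mk (dispSetoid trees) ⟨i0, a0⟩ ∈ BAG t}) =
            ⟨Sum.inl (BL.iW S (trees i').labels (e i') a'), hm2⟩ :=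
          Subtype.ext (congrArg Sum.inl hanch)
        rw [hsub]
        exact Reachable.symm ⟨r2⟩
      · exact ⟨⟨Sum.inl (BL.iW S (trees i0).labels (e i0) a0),
          by
            rw [Set.mem_setOf_eq]
            exact hbag_mem _ i0 a0 (BL.fW_iW S (trees i0).labels (e i0) a0)⟩⟩
  · -- bag sizes
    intro t
    rcases t with w | ⟨ee, j⟩
    · have hb := BL.card_opt_fin (fun i : Fin k =>
        (BL.fW S (trees i).labels (e i) w).map
          (fun a => Quotient.mk (dispSetoid trees) ⟨i, a⟩))
      refine le_trans (le_trans (Set.ncard_le_ncard ?_ hb.1) hb.2) (by simp)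
      intro q hq
      obtain ⟨i, a, hcl, rfl⟩ := hbag_elim _ q hq
      exact ⟨i, by rw [show BL.fW S (trees i).labels (e i) w = some a from hcl]; rfl⟩
    · have hb := BL.card_opt_fin (fun s : Fin k ⊕ Fin 1 =>
        Sum.elim (fun i : Fin k =>
          if (j : ℕ) ≤ (i : ℕ) then
            (BL.fW S (trees i).labels (e i) ee.1.1).map
              (fun a => Quotient.mk (dispSetoid trees) ⟨i, a⟩)
          else
            (BL.fW S (trees i).labels (e i) ee.1.2).map
              (fun a => Quotient.mk (dispSetoid trees) ⟨i, a⟩))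
          (fun _ => (BL.fW S (trees j).labels (e j) ee.1.2).map
            (fun a => Quotient.mk (dispSetoid trees) ⟨j, a⟩)) s)
      refine le_trans (le_trans (Set.ncard_le_ncard ?_ hb.1) hb.2) (by simp)
      intro q hq
      obtain ⟨i, a, hcl, rfl⟩ := hbag_elim _ q hq
      rcases hcl with ⟨hji, hf⟩ | ⟨hij, hf⟩
      · exact ⟨Sum.inl i, by rw [Sum.elim_inl, if_pos hji, hf]; rfl⟩
      · by_cases hji : (j : ℕ) ≤ (i : ℕ)
        · have hijeq : i = j := Fin.ext (le_antisymm hij hji)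
          subst hijeq
          exact ⟨Sum.inr 0, by rw [Sum.elim_inr, hf]; rfl⟩
        · exact ⟨Sum.inl i, by rw [Sum.elim_inl, if_neg hji, hf]; rfl⟩
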